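/- For all odd integers p, q ≥ 3, the direct (tensor) product of complete graphs satisfies χ_so(K_p × K_q) = p·q. -/

import Mathlib

/-- A strong odd coloring of a simple graph: a proper vertex coloring such that for every
vertex `v` and every color `c`, the number of neighbors of `v` colored `c` is zero or odd. -/
def SimpleGraph.IsStrongOddColoring {V α : Type*} (G : SimpleGraph V) (φ : V → α) : Prop :=
  (∀ ⦃u v⦄, G.Adj u v → φ u ≠ φ v) ∧
    ∀ v c, Nat.card {u // G.Adj v u ∧ φ u = c} = 0 ∨
      Odd (Nat.card {u // G.Adj v u ∧ φ u = c})

/-- The strong odd chromatic number: the least `k` such that there is a strong odd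
coloring using `k` colors. -/
noncomputable def SimpleGraph.strongOddChromaticNumber {V : Type*} (G : SimpleGraph V) : ℕ :=
  sInf {k | ∃ φ : V → Fin k, G.IsStrongOddColoring φ}

/-- The direct (tensor) product of two simple graphs. -/
def SimpleGraph.directProd {α β : Type*} (G : SimpleGraph α) (H : SimpleGraph β) :
    SimpleGraph (α × β) where
  Adj x y := G.Adj x.1 y.1 ∧ H.Adj x.2 y.2
  symm := by constructor; rintro x y ⟨h1, h2⟩; exact ⟨h1.symm, h2.symm⟩
  loopless := by constructor; rintro x ⟨h1, -⟩; exact G.irrefl h1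

lemma directProd_top_adj {p q : ℕ} (u v : Fin p × Fin q) :
    ((⊤ : SimpleGraph (Fin p)).directProd ⊤).Adj u v ↔ u.1 ≠ v.1 ∧ u.2 ≠ v.2 := Iff.rfl

lemma swap_soc {p q k : ℕ} {φ : Fin p × Fin q → Fin k}
    (h : ((⊤ : SimpleGraph (Fin p)).directProd ⊤).IsStrongOddColoring φ) :
    ((⊤ : SimpleGraph (Fin q)).directProd ⊤).IsStrongOddColoring (fun u => φ u.swap) := by
  constructor
  · intro u v huv
    exact h.1 ⟨huv.2, huv.1⟩
  · intro v c
    have key : Nat.card {u : Fin q × Fin p //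
          ((⊤ : SimpleGraph (Fin q)).directProd ⊤).Adj v u ∧ φ u.swap = c}
        = Nat.card {u : Fin p × Fin q //
          ((⊤ : SimpleGraph (Fin p)).directProd ⊤).Adj v.swap u ∧ φ u = c} := by
      apply Nat.card_congr
      refine Equiv.subtypeEquiv (Equiv.prodComm _ _) fun u => ?_
      constructor
      · rintro ⟨⟨h1, h2⟩, h3⟩; exact ⟨⟨h2, h1⟩, h3⟩
      · rintro ⟨⟨h1, h2⟩, h3⟩; exact ⟨⟨h2, h1⟩, h3⟩
    rw [key]
    exact h.2 v.swap c

/-- Core lemma: no two vertices in the same row can share a color. -/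
lemma no_row_repeat {p q k : ℕ} (hp : 2 ≤ p) (hqo : Odd q) {φ : Fin p × Fin q → Fin k}
    (h : ((⊤ : SimpleGraph (Fin p)).directProd ⊤).IsStrongOddColoring φ)
    (a : Fin p) (b b' : Fin q) (hbb : b ≠ b') (hcc : φ (a, b) = φ (a, b')) : False := by
  set c := φ (a, b) with hc
  -- any vertex with color c lies in row a
  have hrow : ∀ z : Fin p × Fin q, φ z = c → z.1 = a := by
    intro z hz
    by_contra hza
    have h1 : z.2 = b := by
      by_contra hzb
      exact h.1 (u := z) (v := (a, b)) ⟨hza, hzb⟩ hz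
    have h2 : z.2 = b' := by
      by_contra hzb
      exact h.1 (u := z) (v := (a, b')) ⟨hza, hzb⟩ (hz.trans hcc)
    exact hbb (h1 ▸ h2)
  classical
  set S : Finset (Fin q) := Finset.univ.filter (fun y => φ (a, y) = c) with hS
  have hbS : b ∈ S := by simp [hS]; rfl
  have hb'S : b' ∈ S := by simp [hS, ← hcc]
  -- counting neighbors of (x, y) for x ≠ a
  have hcount : ∀ x : Fin p, x ≠ a → ∀ y : Fin q,
      Nat.card {u : Fin p × Fin q //
        ((⊤ : SimpleGraph (Fin p)).directProd ⊤).Adj (x, y) u ∧ φ u = c}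
        = (S.erase y).card := by
    intro x hx y
    have e : {u : Fin p × Fin q //
        ((⊤ : SimpleGraph (Fin p)).directProd ⊤).Adj (x, y) u ∧ φ u = c}
        ≃ {y' : Fin q // y' ∈ S.erase y} := by
      refine ⟨fun u => ⟨u.1.2, ?_⟩, fun y' => ⟨(a, y'.1), ?_⟩, ?_, ?_⟩
      · obtain ⟨u, ⟨hadj, hu⟩⟩ := u
        refine Finset.mem_erase.mpr ⟨(hadj.2).symm, ?_⟩
        have := hrow u hu
        simp only [hS, Finset.mem_filter, Finset.mem_univ, true_and]
        rw [show (a, u.2) = u from Prod.ext this.symm rfl]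
        exact hu
      · obtain ⟨y', hy'⟩ := y'
        rw [Finset.mem_erase] at hy'
        refine ⟨⟨fun hxa => hx hxa, fun hy => hy'.1 hy.symm⟩, ?_⟩
        have := hy'.2
        simpa [hS] using this
      · rintro ⟨u, ⟨hadj, hu⟩⟩
        exact Subtype.ext (Prod.ext (hrow u hu).symm rfl)
      · rintro ⟨y', hy'⟩
        rfl
    rw [Nat.card_congr e, Nat.card_eq_fintype_card, Fintype.card_coe]
  obtain ⟨x, hx⟩ : ∃ x : Fin p, x ≠ a := by
    have : Nontrivial (Fin p) := Fin.nontrivial_iff_two_le.mpr hp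
    exact exists_ne a
  -- with y = b : count = S.card - 1, nonzero, hence odd, so S.card even
  have h1 := h.2 ((x, b) : Fin p × Fin q) c
  rw [hcount x hx b] at h1
  have hb'e : b' ∈ S.erase b := Finset.mem_erase.mpr ⟨fun hh => hbb hh.symm, hb'S⟩
  have hne : (S.erase b).card ≠ 0 := by
    simp only [ne_eq, Finset.card_eq_zero]
    intro hh; rw [hh] at hb'e; exact absurd hb'e (Finset.notMem_empty _)
  have hodd1 : Odd (S.erase b).card := h1.resolve_left hne
  rw [Finset.card_erase_of_mem hbS] at hodd1
  have hSeven : Even S.card := by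
    rcases Nat.even_or_odd S.card with he | ho
    · exact he
    · exfalso
      have : Even (S.card - 1) := Nat.Odd.sub_odd ho odd_one
      exact (Nat.not_odd_iff_even.mpr this) hodd1
  by_cases hSu : S = Finset.univ
  · have : S.card = q := by rw [hSu]; simp
    rw [this] at hSeven
    exact (Nat.not_odd_iff_even.mpr hSeven) hqo
  · obtain ⟨y, hy⟩ : ∃ y : Fin q, y ∉ S := by
      by_contra hh
      push_neg at hh
      exact hSu (Finset.eq_univ_iff_forall.mpr hh)
    have h2 := h.2 ((x, y) : Fin p × Fin q) c
    rw [hcount x hx y, Finset.erase_eq_of_notMem hy] at h2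
    have hne2 : S.card ≠ 0 := by
      simp only [ne_eq, Finset.card_eq_zero]
      intro hh; rw [hh] at hbS; exact absurd hbS (Finset.notMem_empty _)
    have := h2.resolve_left hne2
    exact (Nat.not_odd_iff_even.mpr hSeven) this

lemma soc_injective {p q k : ℕ} (hp : 3 ≤ p) (hq : 3 ≤ q) (hpo : Odd p) (hqo : Odd q)
    {φ : Fin p × Fin q → Fin k}
    (h : ((⊤ : SimpleGraph (Fin p)).directProd ⊤).IsStrongOddColoring φ) :
    Function.Injective φ := by
  intro u w huw
  by_contra hne
  have hnadj : ¬ ((⊤ : SimpleGraph (Fin p)).directProd ⊤).Adj u w := fun hadj => h.1 hadj huw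
  rw [directProd_top_adj] at hnadj
  push_neg at hnadj
  by_cases h1 : u.1 = w.1
  · have h2 : u.2 ≠ w.2 := fun hh => hne (Prod.ext h1 hh)
    exact no_row_repeat (by omega) hqo h u.1 u.2 w.2 h2
      (by rw [show ((u.1 : Fin p), u.2) = u from rfl, show ((u.1 : Fin p), w.2) = (w.1, w.2) from by rw [h1], huw])
  · have h2 : u.2 = w.2 := hnadj (fun hh => h1 hh)
    refine no_row_repeat (by omega) hpo (swap_soc h) u.2 u.1 w.1 h1 ?_
    show φ (u.1, u.2) = φ (w.1, u.2)
    have hw : ((w.1 : Fin p), u.2) = w := by rw [h2]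
    rw [hw]
    exact huw

/-- `χ_so(K_p × K_q) = p·q` for all odd `p, q ≥ 3`. -/
theorem strongOddChromaticNumber_directProd_complete_odd_odd (p q : ℕ)
    (hp : 3 ≤ p) (hq : 3 ≤ q) (hpo : Odd p) (hqo : Odd q) :
    ((⊤ : SimpleGraph (Fin p)).directProd (⊤ : SimpleGraph (Fin q))).strongOddChromaticNumber =
      p * q := by
  have hmem : p * q ∈ {k | ∃ φ : Fin p × Fin q → Fin k,
      ((⊤ : SimpleGraph (Fin p)).directProd ⊤).IsStrongOddColoring φ} := by
    refine ⟨fun u => finProdFinEquiv u, ?_, ?_⟩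
    · intro u v hadj hfe
      have : u = v := finProdFinEquiv.injective hfe
      rw [this] at hadj
      exact ((⊤ : SimpleGraph (Fin p)).directProd ⊤).irrefl hadj
    · intro v c
      have : Subsingleton {u : Fin p × Fin q //
          ((⊤ : SimpleGraph (Fin p)).directProd ⊤).Adj v u ∧ finProdFinEquiv u = c} := by
        constructor
        rintro ⟨u1, _, hu1⟩ ⟨u2, _, hu2⟩
        exact Subtype.ext (finProdFinEquiv.injective (hu1.trans hu2.symm))
      rcases isEmpty_or_nonempty {u : Fin p × Fin q //
          ((⊤ : SimpleGraph (Fin p)).directProd ⊤).Adj v u ∧ finProdFinEquiv u = c} with he | hne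
      · exact Or.inl (Nat.card_of_isEmpty)
      · right
        have : Nat.card {u : Fin p × Fin q //
            ((⊤ : SimpleGraph (Fin p)).directProd ⊤).Adj v u ∧ finProdFinEquiv u = c} = 1 :=
          Nat.card_unique
        rw [this]; exact odd_one
  refine le_antisymm (Nat.sInf_le hmem) (le_csInf ⟨_, hmem⟩ ?_)
  rintro k ⟨φ, hφ⟩
  have hinj := soc_injective hp hq hpo hqo hφ
  have := Fintype.card_le_of_injective φ hinj
  simpa using this
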